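/- arXiv:2104.06567 — 3 statements merged into one kernel-verified Lean document; each statement's English description precedes it below -/
import Mathlib

section
/- For every compact operator T on a Hilbert space H and every n ≥ 1, the (2n)-th singular value satisfies μ(2n, T) ≤ n^{-1/2} · e(n, T), where e(n, T) = inf{‖T − R‖_HS : rank(R) ≤ n} is the n-th Hilbert–Schmidt approximation number of T. -/
/-!
Removing an operator `R` of rank at most `n` costs at most `n` in the index of the singular
value, so `μ(2n, T) ≤ μ(n, T - R)` and it suffices to show `n μ(n, S)² ≤ ‖S‖²_HS`.
If `t < μ(n, S)`, then `S` is not within `t` of `S P_K` for the projection `P_K` onto the span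
of any `k < n` vectors, which produces a unit vector in `Kᗮ` on which `S` exceeds `t`; greedily
this gives an orthonormal family `f₁, …, fₙ` with `‖S fᵢ‖ > t`, and Bessel's inequality applied
to `S†` bounds `∑ ‖S fᵢ‖²` by the Hilbert–Schmidt sum.
-/

open MeasureTheory ENNReal

noncomputable section

/-- `n`-th singular value of `T`: distance in operator norm to operators of rank at most `n`. -/
def singVal {H : Type*} [NormedAddCommGroup H] [InnerProductSpace ℂ H]
    (T : H →L[ℂ] H) (n : ℕ) : ℝ :=
  sInf {c : ℝ | ∃ R : H →L[ℂ] H,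
    Module.rank ℂ (LinearMap.range (R : H →ₗ[ℂ] H)) ≤ (n : Cardinal) ∧ c = ‖T - R‖}

/-- Hilbert–Schmidt norm of `T` computed with respect to a Hilbert basis `e`. -/
def hsNorm {ι H : Type*} [NormedAddCommGroup H] [InnerProductSpace ℂ H]
    (e : HilbertBasis ι ℂ H) (T : H →L[ℂ] H) : ℝ≥0∞ :=
  (∑' i, ENNReal.ofReal (‖T (e i)‖ ^ 2)) ^ (1 / 2 : ℝ)

/-- `n`-th Hilbert–Schmidt approximation number of `T`. -/
def hsApprox {ι H : Type*} [NormedAddCommGroup H] [InnerProductSpace ℂ H]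
    (e : HilbertBasis ι ℂ H) (T : H →L[ℂ] H) (n : ℕ) : ℝ≥0∞ :=
  ⨅ R ∈ {R : H →L[ℂ] H |
      Module.rank ℂ (LinearMap.range (R : H →ₗ[ℂ] H)) ≤ (n : Cardinal)},
    hsNorm e (T - R)

open scoped InnerProductSpace

namespace HilbertBasis

variable {ι H : Type*} [NormedAddCommGroup H] [InnerProductSpace ℂ H] (e : HilbertBasis ι ℂ H)

theorem tsum_ofReal_norm_inner_sq (x : H) :
    ∑' i, ENNReal.ofReal (‖⟪e i, x⟫_ℂ‖ ^ 2) = ENNReal.ofReal (‖x‖ ^ 2) := by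
  have hsum : HasSum (fun i => ((‖⟪e i, x⟫_ℂ‖ ^ 2 : ℝ) : ℂ)) ((‖x‖ ^ 2 : ℝ) : ℂ) := by
    have h := e.hasSum_inner_mul_inner x x
    rw [inner_self_eq_norm_sq_to_K] at h
    push_cast
    refine h.congr_fun fun i => ?_
    rw [← inner_conj_symm x (e i), RCLike.conj_mul]
    rfl
  have hsum' := Complex.hasSum_ofReal.mp hsum
  rw [← ENNReal.ofReal_tsum_of_nonneg (fun i => by positivity) hsum'.summable, hsum'.tsum_eq]

variable [CompleteSpace H]

theorem tsum_ofReal_norm_adjoint_apply_sq (S : H →L[ℂ] H) :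
    ∑' i, ENNReal.ofReal (‖S.adjoint (e i)‖ ^ 2) = ∑' i, ENNReal.ofReal (‖S (e i)‖ ^ 2) := by
  simp_rw [← e.tsum_ofReal_norm_inner_sq, ContinuousLinearMap.adjoint_inner_right,
    norm_inner_symm (S _)]
  exact ENNReal.tsum_comm

theorem sum_ofReal_norm_apply_sq_le {κ : Type*} {f : κ → H} (hf : Orthonormal ℂ f)
    (s : Finset κ) (S : H →L[ℂ] H) :
    ∑ k ∈ s, ENNReal.ofReal (‖S (f k)‖ ^ 2) ≤ ∑' i, ENNReal.ofReal (‖S (e i)‖ ^ 2) := by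
  calc ∑ k ∈ s, ENNReal.ofReal (‖S (f k)‖ ^ 2)
      = ∑' i, ∑ k ∈ s, ENNReal.ofReal (‖⟪f k, S.adjoint (e i)⟫_ℂ‖ ^ 2) := by
        rw [Summable.tsum_finsetSum fun _ _ => ENNReal.summable]
        simp_rw [ContinuousLinearMap.adjoint_inner_right, norm_inner_symm (S _),
          e.tsum_ofReal_norm_inner_sq]
    _ ≤ ∑' i, ENNReal.ofReal (‖S.adjoint (e i)‖ ^ 2) := by
        gcongr with i
        rw [← ENNReal.ofReal_sum_of_nonneg fun _ _ => by positivity]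
        exact ENNReal.ofReal_le_ofReal (hf.sum_inner_products_le _)
    _ = ∑' i, ENNReal.ofReal (‖S (e i)‖ ^ 2) := e.tsum_ofReal_norm_adjoint_apply_sq S

end HilbertBasis

section SingularValues

variable {H : Type*} [NormedAddCommGroup H] [InnerProductSpace ℂ H]

theorem singVal_le_norm_sub (T R : H →L[ℂ] H) {n : ℕ}
    (hR : Module.rank ℂ (LinearMap.range (R : H →ₗ[ℂ] H)) ≤ n) : singVal T n ≤ ‖T - R‖ :=
  csInf_le ⟨0, by rintro _ ⟨R, -, rfl⟩; exact norm_nonneg _⟩ ⟨R, hR, rfl⟩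

theorem singVal_add_le_singVal_sub (T R : H →L[ℂ] H) {m k : ℕ}
    (hR : Module.rank ℂ (LinearMap.range (R : H →ₗ[ℂ] H)) ≤ m) :
    singVal T (m + k) ≤ singVal (T - R) k := by
  refine le_csInf ⟨_, 0, by simp, rfl⟩ ?_
  rintro _ ⟨R', hR', rfl⟩
  rw [sub_sub]
  refine singVal_le_norm_sub T (R + R') ?_
  calc Module.rank ℂ (LinearMap.range ((R : H →ₗ[ℂ] H) + (R' : H →ₗ[ℂ] H)))
      ≤ Module.rank ℂ (LinearMap.range (R : H →ₗ[ℂ] H)) +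
          Module.rank ℂ (LinearMap.range (R' : H →ₗ[ℂ] H)) := LinearMap.rank_add_le _ _
    _ ≤ m + k := add_le_add hR hR'
    _ = (m + k : ℕ) := (Nat.cast_add m k).symm

theorem exists_mem_orthogonal_lt_norm_apply (S : H →L[ℂ] H) (K : Submodule ℂ H)
    [K.HasOrthogonalProjection] {t : ℝ} (ht : 0 ≤ t) (h : t < ‖S - S ∘L K.starProjection‖) :
    ∃ x ∈ Kᗮ, ‖x‖ = 1 ∧ t < ‖S x‖ := by
  have hle : ‖S - S ∘L K.starProjection‖ ≤ ‖S ∘L Kᗮ.subtypeL‖ := by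
    refine ContinuousLinearMap.opNorm_le_bound _ (by positivity) fun y => ?_
    have hy : (S - S ∘L K.starProjection) y =
        (S ∘L Kᗮ.subtypeL) (Kᗮ.orthogonalProjectionOnto y) := by
      change _ = S (Kᗮ.starProjection y)
      simp [Submodule.starProjection_orthogonal]
    rw [hy]
    exact (ContinuousLinearMap.le_opNorm _ _).trans
      (mul_le_mul_of_nonneg_left (Kᗮ.norm_orthogonalProjectionOnto_apply_le y) (norm_nonneg _))
  lift t to NNReal using ht
  obtain ⟨x, hx, hSx⟩ :=
    (S ∘L Kᗮ.subtypeL).exists_nnnorm_eq_one_lt_apply_of_lt_opNNNorm (r := t) (h.trans_le hle)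
  exact ⟨x, x.2, by simpa using congrArg NNReal.toReal hx, hSx⟩

theorem rank_range_comp_starProjection_le (S : H →L[ℂ] H) (K : Submodule ℂ H)
    [K.HasOrthogonalProjection] :
    Module.rank ℂ (LinearMap.range ((S ∘L K.starProjection : H →L[ℂ] H) : H →ₗ[ℂ] H)) ≤
      Module.rank ℂ K :=
  calc _ ≤ Module.rank ℂ (LinearMap.range ((S ∘L K.subtypeL : K →L[ℂ] H) : K →ₗ[ℂ] H)) :=
        Submodule.rank_mono (LinearMap.range_comp_le_range _ _)
    _ ≤ Module.rank ℂ K := rank_range_le _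

theorem exists_orthonormal_lt_norm_apply_of_lt_singVal (S : H →L[ℂ] H) {t : ℝ} (ht : 0 ≤ t)
    {n : ℕ} (h : t < singVal S n) : ∃ f : Fin n → H, Orthonormal ℂ f ∧ ∀ i, t < ‖S (f i)‖ := by
  suffices ∀ k ≤ n, ∃ f : Fin k → H, Orthonormal ℂ f ∧ ∀ i, t < ‖S (f i)‖ from this n le_rfl
  intro k
  induction k with
  | zero => exact fun _ => ⟨Fin.elim0, .of_isEmpty _, fun i => i.elim0⟩
  | succ k ih =>
    intro hk
    obtain ⟨f, hf, hSf⟩ := ih (Nat.le_of_succ_le hk)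
    let K := Submodule.span ℂ (Set.range f)
    have : FiniteDimensional ℂ K := FiniteDimensional.span_of_finite ℂ (Set.finite_range f)
    have hrank : Module.rank ℂ
        (LinearMap.range ((S ∘L K.starProjection : H →L[ℂ] H) : H →ₗ[ℂ] H)) ≤ n :=
      calc _ ≤ Module.rank ℂ K := rank_range_comp_starProjection_le S K
        _ ≤ k := (rank_span_le _).trans (by simpa using Cardinal.mk_range_le_lift (f := f))
        _ ≤ n := by exact_mod_cast Nat.le_of_succ_le hk
    obtain ⟨x, hxK, hx, hSx⟩ :=
      exists_mem_orthogonal_lt_norm_apply S K ht (h.trans_le (singVal_le_norm_sub S _ hrank))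
    refine ⟨Matrix.vecCons x f, ?_, Fin.cases hSx hSf⟩
    exact orthonormal_vecCons_iff.mpr
      ⟨hx, fun i => K.inner_left_of_mem_orthogonal (Submodule.subset_span ⟨i, rfl⟩) hxK, hf⟩

end SingularValues

theorem ofReal_singVal_le_hsNorm {ι H : Type*} [NormedAddCommGroup H] [InnerProductSpace ℂ H]
    [CompleteSpace H] (e : HilbertBasis ι ℂ H) (S : H →L[ℂ] H) {n : ℕ} (hn : 0 < n) :
    ENNReal.ofReal (singVal S n) ≤ ENNReal.ofReal ((n : ℝ) ^ (-(1 / 2) : ℝ)) * hsNorm e S := by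
  have hn' : (0 : ℝ) < n := by exact_mod_cast hn
  set B := ∑' i, ENNReal.ofReal (‖S (e i)‖ ^ 2) with hB_def
  rcases eq_or_ne B ∞ with hB | hB
  · rw [hsNorm, ← hB_def, hB, ENNReal.top_rpow_of_pos (by norm_num),
      ENNReal.mul_top (by simpa using Real.rpow_pos_of_pos hn' _)]
    exact le_top
  have hμ : singVal S n ≤ √(B.toReal / n) := by
    refine le_of_not_gt fun h => ?_
    obtain ⟨f, hf, hSf⟩ := exists_orthonormal_lt_norm_apply_of_lt_singVal S (Real.sqrt_nonneg _) h
    have hsum : ∑ i, ‖S (f i)‖ ^ 2 ≤ B.toReal := by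
      refine (ENNReal.ofReal_le_iff_le_toReal hB).mp ?_
      rw [ENNReal.ofReal_sum_of_nonneg fun _ _ => by positivity]
      exact e.sum_ofReal_norm_apply_sq_le hf Finset.univ S
    have : B.toReal < ∑ i, ‖S (f i)‖ ^ 2 :=
      calc B.toReal = ∑ _i : Fin n, √(B.toReal / n) ^ 2 := by
            rw [Real.sq_sqrt (by positivity)]
            simp [mul_div_cancel₀ _ hn'.ne']
        _ < ∑ i, ‖S (f i)‖ ^ 2 :=
            Finset.sum_lt_sum_of_nonempty (Finset.univ_nonempty_iff.mpr ⟨⟨0, hn⟩⟩)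
              fun i _ => pow_lt_pow_left₀ (hSf i) (Real.sqrt_nonneg _) two_ne_zero
    linarith
  have hhs : hsNorm e S = ENNReal.ofReal (B.toReal ^ (1 / 2 : ℝ)) := by
    rw [← ENNReal.ofReal_rpow_of_nonneg ENNReal.toReal_nonneg (by norm_num),
      ENNReal.ofReal_toReal hB, hsNorm]
  calc ENNReal.ofReal (singVal S n) ≤ ENNReal.ofReal √(B.toReal / n) := ENNReal.ofReal_le_ofReal hμ
    _ = ENNReal.ofReal ((n : ℝ) ^ (-(1 / 2) : ℝ)) * hsNorm e S := by
      rw [hhs, ← ENNReal.ofReal_mul (by positivity), Real.sqrt_eq_rpow,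
        Real.div_rpow ENNReal.toReal_nonneg hn'.le, Real.rpow_neg hn'.le, div_eq_inv_mul]

theorem singVal_two_mul_le_general {H : Type*} [NormedAddCommGroup H] [InnerProductSpace ℂ H]
    [CompleteSpace H] {ι : Type*} (e : HilbertBasis ι ℂ H) (T : H →L[ℂ] H)
    (n : ℕ) (hn : 1 ≤ n) :
    ENNReal.ofReal (singVal T (2 * n)) ≤
      ENNReal.ofReal ((n : ℝ) ^ (-(1 / 2) : ℝ)) * hsApprox e T n := by
  have hc : ENNReal.ofReal ((n : ℝ) ^ (-(1 / 2) : ℝ)) ≠ 0 := by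
    simpa using Real.rpow_pos_of_pos (Nat.cast_pos.mpr hn) _
  simp only [hsApprox, ENNReal.mul_iInf_of_ne hc ENNReal.ofReal_ne_top]
  refine le_iInf₂ fun R hR => ?_
  calc ENNReal.ofReal (singVal T (2 * n))
      ≤ ENNReal.ofReal (singVal (T - R) n) :=
        ENNReal.ofReal_le_ofReal (two_mul n ▸ singVal_add_le_singVal_sub T R hR)
    _ ≤ _ := ofReal_singVal_le_hsNorm e (T - R) hn

/-- Birman–Solomyak: `μ(2n, T) ≤ n^{-1/2} e(n, T)`. -/
theorem singVal_two_mul_le {H : Type*} [NormedAddCommGroup H] [InnerProductSpace ℂ H]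
    [CompleteSpace H] {ι : Type*} (e : HilbertBasis ι ℂ H) (T : H →L[ℂ] H)
    (hT : IsCompactOperator (T : H → H)) (n : ℕ) (hn : 1 ≤ n) :
    ENNReal.ofReal (singVal T (2 * n)) ≤
      ENNReal.ofReal ((n : ℝ) ^ (-(1 / 2) : ℝ)) * hsApprox e T n :=
  singVal_two_mul_le_general e T n hn
end
end

section
/- Discrete Hardy inequality: Let (a_n)_{n≥1} and (b_n)_{n≥1} be nonnegative, monotonically decreasing sequences of real numbers, and suppose there exist constants μ, r, C > 0 such that a_n ≤ C n^{−r} (Σ_{k=n}^∞ k^{rμ−1} b_k^μ)^{1/μ} for all n ≥ 1. Then for every 0 < q ≤ ∞ and every s > r, the Lorentz sequence quasinorm satisfies ‖(a_n)‖_{ℓ_{1/s, q}} ≤ C' ‖(b_n)‖_{ℓ_{1/s, q}} for some constant C' depending only on μ, s, r, C. -/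
/-!
Fix `r < s' < s` and put `M_n = sup_{k ≥ n} (k + 1)^{s'} b_k`. Bounding
`(k + 1)^{s'μ} b_k^μ ≤ M_n^μ` in the hypothesis leaves the tail
`Σ_{k ≥ n} (k + 1)^{-(s' - r)μ - 1} ≲ (n + 1)^{-(s' - r)μ}`, so `a_n ≲ (n + 1)^{-s'} M_n`; for
`q = ∞` this is already the claim. For `q < ∞`, monotonicity of `b` and summation by parts give
`M_n^q ≲ (n + 1)^{s'q} b_n^q + Σ_{k ≥ n} (k + 1)^{s'q - 1} b_k^q`, and exchanging the order of
summation in the resulting double sum only costs the factor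
`Σ_{n ≤ k} (n + 1)^{(s - s')q - 1} ≲ (k + 1)^{(s - s')q}`.
-/

open MeasureTheory ENNReal

noncomputable section

/-- Lorentz sequence quasinorm `ℓ_{p,q}` of a nonnegative (already decreasing) sequence,
indexed from `n = 1` (so `x n` stands for `x_{n+1}`). -/
def lorentzNorm (p : ℝ) (q : ℝ≥0∞) (x : ℕ → ℝ≥0∞) : ℝ≥0∞ :=
  if q = ∞ then ⨆ n : ℕ, ENNReal.ofReal (((n : ℝ) + 1) ^ (1 / p)) * x n
  else (∑' n : ℕ,
      (ENNReal.ofReal (((n : ℝ) + 1) ^ (1 / p - 1 / q.toReal)) * x n) ^ q.toReal) ^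
    (1 / q.toReal)

/-- The `ℓ_p` quasinorm of a nonnegative sequence. -/
def lpSeqNorm (p : ℝ) (b : ℕ → ℝ) : ℝ≥0∞ :=
  (∑' n : ℕ, ENNReal.ofReal (b n ^ p)) ^ (1 / p)

theorem integral_rpow_sub_one {p x y : ℝ} (hp : p ≠ 0) (hx : 0 < x) (hxy : x ≤ y) :
    ∫ u in x..y, u ^ (p - 1) = (y ^ p - x ^ p) / p := by
  rw [integral_rpow (Or.inr ⟨by contrapose! hp; linarith,
    Set.notMem_uIcc_of_lt hx (hx.trans_le hxy)⟩), sub_add_cancel]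

theorem rpow_sub_rpow_div_le {p x y d : ℝ} (hp : p ≠ 0) (hx : 0 < x) (hxy : x ≤ y)
    (hd : ∀ u ∈ Set.Icc x y, u ^ (p - 1) ≤ d) : (y ^ p - x ^ p) / p ≤ d * (y - x) := by
  have := intervalIntegral.integral_mono_on hxy
    (intervalIntegral.intervalIntegrable_rpow (Or.inr (Set.notMem_uIcc_of_lt hx (hx.trans_le hxy))))
    (intervalIntegrable_const (μ := volume)) hd
  rwa [integral_rpow_sub_one hp hx hxy, intervalIntegral.integral_const, smul_eq_mul,
    mul_comm] at this

theorem le_rpow_sub_rpow_div {p x y d : ℝ} (hp : p ≠ 0) (hx : 0 < x) (hxy : x ≤ y)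
    (hd : ∀ u ∈ Set.Icc x y, d ≤ u ^ (p - 1)) : d * (y - x) ≤ (y ^ p - x ^ p) / p := by
  have := intervalIntegral.integral_mono_on hxy (intervalIntegrable_const (μ := volume))
    (intervalIntegral.intervalIntegrable_rpow (Or.inr (Set.notMem_uIcc_of_lt hx (hx.trans_le hxy))))
    hd
  rwa [integral_rpow_sub_one hp hx hxy, intervalIntegral.integral_const, smul_eq_mul,
    mul_comm] at this

theorem rpow_add_one_sub_rpow_le {β x : ℝ} (hβ : 0 < β) (hx : 1 ≤ x) :
    (x + 1) ^ β - x ^ β ≤ β * 2 ^ β * x ^ (β - 1) := by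
  have hx0 : 0 < x := by linarith
  -- `u ^ (β - 1) = u ^ β / u ≤ (2 * x) ^ β / x` on `[x, x + 1]`, whatever the sign of `β - 1`
  have hd : ∀ u ∈ Set.Icc x (x + 1), u ^ (β - 1) ≤ 2 ^ β * x ^ (β - 1) := by
    rintro u ⟨hxu, hux⟩
    have hu0 : 0 < u := hx0.trans_le hxu
    rw [Real.rpow_sub_one hu0.ne', Real.rpow_sub_one hx0.ne', ← mul_div_assoc,
      ← Real.mul_rpow zero_le_two hx0.le]
    gcongr
    linarith
  have := rpow_sub_rpow_div_le hβ.ne' hx0 (by linarith) hd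
  rw [add_sub_cancel_left, mul_one, div_le_iff₀ hβ] at this
  linarith

theorem sum_range_rpow_neg_sub_one_le {γ x : ℝ} (hγ : 0 < γ) (hx : 1 ≤ x) (K : ℕ) :
    ∑ k ∈ Finset.range K, (x + k) ^ (-γ - 1) ≤ (1 + 1 / γ) * x ^ (-γ) := by
  have hx0 : 0 < x := by linarith
  have hstep : ∀ k : ℕ, (x + (k + 1 : ℕ)) ^ (-γ - 1) ≤
      1 / γ * ((x + k) ^ (-γ) - (x + (k + 1 : ℕ)) ^ (-γ)) := by
    intro k
    have hxk : 0 < x + k := by positivity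
    have := le_rpow_sub_rpow_div (neg_ne_zero.mpr hγ.ne') hxk (le_add_of_nonneg_right zero_le_one)
      (fun u hu => Real.rpow_le_rpow_of_nonpos (hxk.trans_le hu.1) hu.2 (by linarith))
    push_cast
    rw [add_sub_cancel_left, mul_one, div_neg, ← neg_div, neg_sub, div_eq_inv_mul] at this
    simpa [add_assoc] using this
  rcases K with _ | K
  · simp only [Finset.range_zero, Finset.sum_empty]
    positivity
  have htail : ∑ k ∈ Finset.range K, (x + (k + 1 : ℕ)) ^ (-γ - 1) ≤ 1 / γ * x ^ (-γ) := by
    calc _ ≤ ∑ k ∈ Finset.range K, 1 / γ * ((x + k) ^ (-γ) - (x + (k + 1 : ℕ)) ^ (-γ)) :=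
          Finset.sum_le_sum fun k _ => hstep k
      _ = 1 / γ * (x ^ (-γ) - (x + K) ^ (-γ)) := by
          rw [← Finset.mul_sum, Finset.sum_range_sub' (fun k : ℕ => (x + k) ^ (-γ)),
            Nat.cast_zero, add_zero]
      _ ≤ 1 / γ * x ^ (-γ) := by
          have : 0 ≤ (x + K) ^ (-γ) := by positivity
          gcongr
          linarith
  have hfirst : x ^ (-γ - 1) ≤ x ^ (-γ) := Real.rpow_le_rpow_of_exponent_le hx (by linarith)
  rw [Finset.sum_range_succ', Nat.cast_zero, add_zero]
  linarith

theorem sum_range_rpow_sub_one_le {γ : ℝ} (hγ : 0 < γ) (m : ℕ) :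
    ∑ n ∈ Finset.range (m + 1), ((n : ℝ) + 1) ^ (γ - 1) ≤ (1 + 1 / γ) * ((m : ℝ) + 1) ^ γ := by
  have hm : (0 : ℝ) < m + 1 := by positivity
  rcases le_or_gt 1 γ with hγ1 | hγ1
  · -- increasing terms: each is at most the last one
    calc _ ≤ ∑ _n ∈ Finset.range (m + 1), ((m : ℝ) + 1) ^ (γ - 1) := by
          refine Finset.sum_le_sum fun n hn => ?_
          have : (n : ℝ) ≤ m := by exact_mod_cast Finset.mem_range_succ_iff.mp hn
          gcongr
      _ = ((m : ℝ) + 1) ^ γ := by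
          rw [Finset.sum_const, Finset.card_range, nsmul_eq_mul, Nat.cast_succ,
            ← Real.rpow_one_add' hm.le (by linarith), add_sub_cancel]
      _ ≤ (1 + 1 / γ) * ((m : ℝ) + 1) ^ γ := by
          have : 0 < 1 / γ := by positivity
          nlinarith [Real.rpow_pos_of_pos hm γ]
  · -- decreasing terms: compare with the telescoping sum of `(n + 1) ^ γ - n ^ γ`
    have hstep : ∀ n : ℕ,
        ((n : ℝ) + 1) ^ (γ - 1) ≤ 1 / γ * (((n + 1 : ℕ) : ℝ) ^ γ - (n : ℝ) ^ γ) := by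
      intro n
      rcases n.eq_zero_or_pos with rfl | hn
      · rw [Nat.cast_zero, zero_add, Nat.cast_one, Real.one_rpow, Real.one_rpow,
          Real.zero_rpow hγ.ne', sub_zero, mul_one, le_div_iff₀ hγ, one_mul]
        exact hγ1.le
      · have hn' : (0 : ℝ) < n := Nat.cast_pos.mpr hn
        have := le_rpow_sub_rpow_div hγ.ne' hn' (le_add_of_nonneg_right zero_le_one)
          (fun u hu => Real.rpow_le_rpow_of_nonpos (hn'.trans_le hu.1) hu.2 (by linarith))
        rw [add_sub_cancel_left, mul_one, div_eq_inv_mul] at this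
        simpa using this
    calc _ ≤ ∑ n ∈ Finset.range (m + 1), 1 / γ * (((n + 1 : ℕ) : ℝ) ^ γ - (n : ℝ) ^ γ) :=
          Finset.sum_le_sum fun n _ => hstep n
      _ = 1 / γ * ((m : ℝ) + 1) ^ γ := by
          rw [← Finset.mul_sum, Finset.sum_range_sub (fun n : ℕ => (n : ℝ) ^ γ), Nat.cast_zero,
            Real.zero_rpow hγ.ne', sub_zero, Nat.cast_succ]
      _ ≤ (1 + 1 / γ) * ((m : ℝ) + 1) ^ γ := by
          nlinarith [Real.rpow_pos_of_pos hm γ]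

/-- `(n + 1) ^ e`: the weight `n ^ e` of the paper in the 0-based indexing of `lorentzNorm`. -/
def powWeight (e : ℝ) (n : ℕ) : ℝ≥0∞ := ENNReal.ofReal (((n : ℝ) + 1) ^ e)

theorem powWeight_mul_powWeight (e e' : ℝ) (n : ℕ) :
    powWeight e n * powWeight e' n = powWeight (e + e') n := by
  rw [powWeight, powWeight, powWeight, ← ENNReal.ofReal_mul (by positivity),
    ← Real.rpow_add (by positivity)]

theorem powWeight_rpow (e : ℝ) (n : ℕ) {t : ℝ} (ht : 0 ≤ t) :
    powWeight e n ^ t = powWeight (e * t) n := by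
  rw [powWeight, powWeight, ENNReal.ofReal_rpow_of_nonneg (by positivity) ht,
    ← Real.rpow_mul (by positivity)]

theorem powWeight_mul_rpow (e : ℝ) (n : ℕ) {t : ℝ} (ht : 0 ≤ t) (x : ℝ≥0∞) :
    (powWeight e n * x) ^ t = powWeight (e * t) n * x ^ t := by
  rw [ENNReal.mul_rpow_of_nonneg _ _ ht, powWeight_rpow e n ht]

theorem powWeight_le_powWeight {e : ℝ} (he : 0 ≤ e) {m n : ℕ} (hmn : m ≤ n) :
    powWeight e m ≤ powWeight e n := by
  unfold powWeight
  gcongr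

theorem powWeight_succ_le {β : ℝ} (hβ : 0 < β) (m : ℕ) :
    powWeight β (m + 1) ≤ powWeight β m + ENNReal.ofReal (β * 2 ^ β) * powWeight (β - 1) m := by
  have := rpow_add_one_sub_rpow_le hβ (le_add_of_nonneg_left m.cast_nonneg : (1 : ℝ) ≤ m + 1)
  rw [powWeight, powWeight, powWeight, ← ENNReal.ofReal_mul (by positivity),
    ← ENNReal.ofReal_add (by positivity) (by positivity), Nat.cast_succ]
  exact ENNReal.ofReal_le_ofReal (by linarith)

theorem tsum_powWeight_add_le {γ : ℝ} (hγ : 0 < γ) (n : ℕ) :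
    ∑' k, powWeight (-γ - 1) (n + k) ≤ ENNReal.ofReal (1 + 1 / γ) * powWeight (-γ) n := by
  refine ENNReal.tsum_le_of_sum_range_le fun K => ?_
  rw [powWeight, ← ENNReal.ofReal_mul (by positivity)]
  simp_rw [powWeight, Nat.cast_add, add_right_comm (n : ℝ) _ 1]
  rw [← ENNReal.ofReal_sum_of_nonneg fun _ _ => by positivity]
  exact ENNReal.ofReal_le_ofReal
    (sum_range_rpow_neg_sub_one_le hγ (le_add_of_nonneg_left n.cast_nonneg) K)

theorem sum_range_powWeight_le {γ : ℝ} (hγ : 0 < γ) (m : ℕ) :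
    ∑ n ∈ Finset.range (m + 1), powWeight (γ - 1) n ≤
      ENNReal.ofReal (1 + 1 / γ) * powWeight γ m := by
  rw [powWeight, ← ENNReal.ofReal_mul (by positivity)]
  simp_rw [powWeight]
  rw [← ENNReal.ofReal_sum_of_nonneg fun _ _ => by positivity]
  exact ENNReal.ofReal_le_ofReal (sum_range_rpow_sub_one_le hγ m)

theorem mul_le_add_sum_of_le_add {f d B : ℕ → ℝ≥0∞} (hf : ∀ m, f (m + 1) ≤ f m + d m)
    (hB : Antitone B) (n k : ℕ) :
    f (n + k) * B (n + k) ≤ f n * B n + ∑ j ∈ Finset.range k, d (n + j) * B (n + j) := by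
  induction k with
  | zero => simp
  | succ k ih =>
    have hBk : B (n + (k + 1)) ≤ B (n + k) := hB (by omega)
    calc f (n + (k + 1)) * B (n + (k + 1))
        ≤ (f (n + k) + d (n + k)) * B (n + (k + 1)) := by gcongr; exact hf _
      _ ≤ f (n + k) * B (n + k) + d (n + k) * B (n + k) := by rw [add_mul]; gcongr
      _ ≤ _ := by
        rw [Finset.sum_range_succ, ← add_assoc]
        gcongr

theorem tsum_mul_tsum_add_eq (g H : ℕ → ℝ≥0∞) :
    ∑' n, g n * ∑' k, H (n + k) = ∑' m, (∑ n ∈ Finset.range (m + 1), g n) * H m := by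
  have hshift : ∀ n, g n * ∑' k, H (n + k) = ∑' m, if n ≤ m then g n * H m else 0 := by
    intro n
    rw [← ENNReal.summable.sum_add_tsum_nat_add' (k := n)
        (f := fun m => if n ≤ m then g n * H m else 0),
      Finset.sum_eq_zero fun i hi => if_neg (by simpa using hi), zero_add,
      ← ENNReal.tsum_mul_left]
    exact tsum_congr fun k => by rw [if_pos (Nat.le_add_left n k), add_comm]
  rw [tsum_congr hshift, ENNReal.tsum_comm]
  refine tsum_congr fun m => ?_
  rw [tsum_eq_sum (s := Finset.range (m + 1)) fun n hn => if_neg (by simpa using hn),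
    Finset.sum_mul]
  exact Finset.sum_congr rfl fun n hn => if_pos (Finset.mem_range_succ_iff.mp hn)

theorem tsum_powWeight_mul_tsum_add_le {γ : ℝ} (hγ : 0 < γ) (H : ℕ → ℝ≥0∞) :
    ∑' n, powWeight (γ - 1) n * ∑' k, H (n + k) ≤
      ENNReal.ofReal (1 + 1 / γ) * ∑' m, powWeight γ m * H m := by
  rw [tsum_mul_tsum_add_eq, ← ENNReal.tsum_mul_left]
  refine ENNReal.tsum_le_tsum fun m => ?_
  rw [← mul_assoc]
  gcongr
  exact sum_range_powWeight_le hγ m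

def tailSup (e : ℝ) (B : ℕ → ℝ≥0∞) (n : ℕ) : ℝ≥0∞ := ⨆ k, powWeight e (n + k) * B (n + k)

theorem tailSup_rpow (e : ℝ) (B : ℕ → ℝ≥0∞) (n : ℕ) {t : ℝ} (ht : 0 < t) :
    tailSup e B n ^ t = tailSup (e * t) (fun m => B m ^ t) n := by
  simp_rw [tailSup, ← powWeight_mul_rpow e _ ht.le]
  exact (ENNReal.orderIsoRpow t ht).map_iSup _

theorem powWeight_mul_tailSup_le {e : ℝ} (he : 0 ≤ e) (s : ℝ) (B : ℕ → ℝ≥0∞) (n : ℕ) :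
    powWeight e n * tailSup s B n ≤ tailSup (e + s) B 0 := by
  rw [tailSup, ENNReal.mul_iSup]
  refine iSup_le fun k => le_iSup_of_le (n + k) ?_
  rw [zero_add, ← mul_assoc, ← powWeight_mul_powWeight]
  gcongr
  exact powWeight_le_powWeight he (Nat.le_add_right n k)

theorem tailSup_le_of_antitone {β : ℝ} (hβ : 0 < β) {B : ℕ → ℝ≥0∞} (hB : Antitone B) (n : ℕ) :
    tailSup β B n ≤ powWeight β n * B n +
      ENNReal.ofReal (β * 2 ^ β) * ∑' k, powWeight (β - 1) (n + k) * B (n + k) := by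
  refine iSup_le fun k => (mul_le_add_sum_of_le_add (powWeight_succ_le hβ) hB n k).trans ?_
  simp_rw [mul_assoc, ← Finset.mul_sum]
  gcongr
  exact ENNReal.sum_le_tsum _

theorem le_mul_powWeight_mul_tailSup {μ r s : ℝ} (hμ : 0 < μ) (hrs : r < s) (C : ℝ)
    {A B : ℕ → ℝ≥0∞} {n : ℕ}
    (hA : A n ≤ ENNReal.ofReal C * powWeight (-r) n *
      (∑' k, powWeight (r * μ - 1) (n + k) * B (n + k) ^ μ) ^ (1 / μ)) :
    A n ≤ ENNReal.ofReal (C * (1 + 1 / ((s - r) * μ)) ^ (1 / μ)) *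
      (powWeight (-s) n * tailSup s B n) := by
  set γ := (s - r) * μ with hγ_def
  have hγ : 0 < γ := mul_pos (sub_pos.mpr hrs) hμ
  set M := tailSup s B n
  have hterm : ∀ k, powWeight (r * μ - 1) (n + k) * B (n + k) ^ μ ≤
      powWeight (-γ - 1) (n + k) * M ^ μ := by
    intro k
    have hsplit : r * μ - 1 = -γ - 1 + s * μ := by rw [hγ_def]; ring
    rw [hsplit, ← powWeight_mul_powWeight, mul_assoc, ← powWeight_mul_rpow _ _ hμ.le]
    gcongr
    exact le_iSup (fun k => powWeight s (n + k) * B (n + k)) k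
  have hsum : ∑' k, powWeight (r * μ - 1) (n + k) * B (n + k) ^ μ ≤
      ENNReal.ofReal (1 + 1 / γ) * powWeight (-γ) n * M ^ μ := by
    calc _ ≤ ∑' k, powWeight (-γ - 1) (n + k) * M ^ μ := ENNReal.tsum_le_tsum hterm
      _ ≤ _ := by
        rw [ENNReal.tsum_mul_right]
        gcongr
        exact tsum_powWeight_add_le hγ n
  have hexp : -γ * (1 / μ) = r - s := by rw [hγ_def]; field_simp; ring
  calc A n ≤ ENNReal.ofReal C * powWeight (-r) n *
        (ENNReal.ofReal (1 + 1 / γ) * powWeight (-γ) n * M ^ μ) ^ (1 / μ) := by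
        refine hA.trans ?_
        gcongr
    _ = ENNReal.ofReal (C * (1 + 1 / γ) ^ (1 / μ)) * (powWeight (-s) n * M) := by
        rw [ENNReal.mul_rpow_of_nonneg _ _ (by positivity),
          ENNReal.mul_rpow_of_nonneg _ _ (by positivity), ← ENNReal.rpow_mul,
          mul_one_div_cancel hμ.ne', ENNReal.rpow_one, powWeight_rpow _ _ (by positivity), hexp,
          ENNReal.ofReal_rpow_of_nonneg (by positivity) (by positivity),
          ENNReal.ofReal_mul' (by positivity)]
        rw [show -s = -r + (r - s) by ring, ← powWeight_mul_powWeight]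
        ring

theorem powWeight_mul_rpow_le_of_le_tailSup {s' s t : ℝ} (hs' : 0 < s') (ht : 0 < t)
    (c : ℝ≥0∞) {A B : ℕ → ℝ≥0∞} (hB : Antitone B) {n : ℕ}
    (hAB : A n ≤ c * (powWeight (-s') n * tailSup s' B n)) :
    powWeight (s * t - 1) n * A n ^ t ≤
      c ^ t * (powWeight (s * t - 1) n * B n ^ t + ENNReal.ofReal (s' * t * 2 ^ (s' * t)) *
        (powWeight ((s - s') * t - 1) n *
          ∑' k, powWeight (s' * t - 1) (n + k) * B (n + k) ^ t)) := by
  set β := s' * t with hβ_def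
  have hBt : Antitone fun m => B m ^ t := fun i j hij => ENNReal.rpow_le_rpow (hB hij) ht.le
  have hAt : A n ^ t ≤ c ^ t * (powWeight (-β) n * tailSup β (fun m => B m ^ t) n) := by
    calc A n ^ t ≤ (c * (powWeight (-s') n * tailSup s' B n)) ^ t :=
          ENNReal.rpow_le_rpow hAB ht.le
      _ = _ := by
        rw [ENNReal.mul_rpow_of_nonneg _ _ ht.le, powWeight_mul_rpow _ _ ht.le,
          tailSup_rpow _ _ _ ht, neg_mul]
  have hw₁ : powWeight (s * t - 1) n * powWeight (-β) n = powWeight ((s - s') * t - 1) n := by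
    rw [powWeight_mul_powWeight, hβ_def]
    ring_nf
  have hw₂ : powWeight ((s - s') * t - 1) n * powWeight β n = powWeight (s * t - 1) n := by
    rw [powWeight_mul_powWeight, hβ_def]
    ring_nf
  calc powWeight (s * t - 1) n * A n ^ t
      ≤ powWeight (s * t - 1) n * (c ^ t * (powWeight (-β) n *
          (powWeight β n * B n ^ t + ENNReal.ofReal (β * 2 ^ β) *
            ∑' k, powWeight (β - 1) (n + k) * B (n + k) ^ t))) := by
        gcongr
        exact hAt.trans (by gcongr; exact tailSup_le_of_antitone (mul_pos hs' ht) hBt n)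
    _ = _ := by
        rw [mul_left_comm, ← mul_assoc _ (powWeight (-β) n), hw₁, mul_add,
          ← mul_assoc _ (powWeight β n), hw₂]
        ring

theorem tsum_powWeight_mul_rpow_le {s' s t : ℝ} (hs' : 0 < s') (hs's : s' < s) (ht : 0 < t)
    (c : ℝ≥0∞) {A B : ℕ → ℝ≥0∞} (hB : Antitone B)
    (hAB : ∀ n, A n ≤ c * (powWeight (-s') n * tailSup s' B n)) :
    ∑' n, powWeight (s * t - 1) n * A n ^ t ≤
      c ^ t * ENNReal.ofReal (1 + s' * t * 2 ^ (s' * t) * (1 + 1 / ((s - s') * t))) *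
        ∑' n, powWeight (s * t - 1) n * B n ^ t := by
  set β := s' * t with hβ_def
  set H : ℕ → ℝ≥0∞ := fun m => powWeight (β - 1) m * B m ^ t
  set S := ∑' n, powWeight (s * t - 1) n * B n ^ t
  have hH : ∀ m, powWeight ((s - s') * t) m * H m = powWeight (s * t - 1) m * B m ^ t := by
    intro m
    rw [← mul_assoc, powWeight_mul_powWeight, hβ_def]
    ring_nf
  calc ∑' n, powWeight (s * t - 1) n * A n ^ t
      ≤ ∑' n, c ^ t * (powWeight (s * t - 1) n * B n ^ t + ENNReal.ofReal (β * 2 ^ β) *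
        (powWeight ((s - s') * t - 1) n * ∑' k, H (n + k))) :=
      ENNReal.tsum_le_tsum fun n => powWeight_mul_rpow_le_of_le_tailSup hs' ht c hB (hAB n)
    _ = c ^ t * (S + ENNReal.ofReal (β * 2 ^ β) *
        ∑' n, powWeight ((s - s') * t - 1) n * ∑' k, H (n + k)) := by
      rw [ENNReal.tsum_mul_left, ENNReal.tsum_add, ENNReal.tsum_mul_left]
    _ ≤ c ^ t * (S + ENNReal.ofReal (β * 2 ^ β) *
        (ENNReal.ofReal (1 + 1 / ((s - s') * t)) * S)) := by
      gcongr
      simpa only [hH] using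
        tsum_powWeight_mul_tsum_add_le (mul_pos (sub_pos.mpr hs's) ht) H
    _ = _ := by
      rw [ENNReal.ofReal_add (q := β * 2 ^ β * (1 + 1 / ((s - s') * t))) zero_le_one
          (by positivity), ENNReal.ofReal_one,
        ENNReal.ofReal_mul (p := β * 2 ^ β) (by positivity)]
      ring

theorem lorentzNorm_top_eq_tailSup (s : ℝ) (x : ℕ → ℝ≥0∞) :
    lorentzNorm (1 / s) ⊤ x = tailSup s x 0 := by
  simp [lorentzNorm, tailSup, powWeight]

theorem lorentzNorm_eq_tsum {q : ℝ≥0∞} (hq0 : q ≠ 0) (hq : q ≠ ⊤) (s : ℝ) (x : ℕ → ℝ≥0∞) :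
    lorentzNorm (1 / s) q x =
      (∑' n, powWeight (s * q.toReal - 1) n * x n ^ q.toReal) ^ (1 / q.toReal) := by
  have ht : 0 < q.toReal := ENNReal.toReal_pos hq0 hq
  rw [lorentzNorm, if_neg hq, one_div_one_div]
  refine congrArg (· ^ _) (tsum_congr fun n => ?_)
  rw [← powWeight, powWeight_mul_rpow _ _ ht.le, sub_mul, one_div_mul_cancel ht.ne']

theorem exists_lorentzNorm_le_of_le_tailSup {s' s c : ℝ} (hs' : 0 < s') (hs's : s' < s)
    (hc : 0 < c) {q : ℝ≥0∞} (hq : 0 < q) :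
    ∃ K : ℝ, 0 < K ∧ ∀ A B : ℕ → ℝ≥0∞, Antitone B →
      (∀ n, A n ≤ ENNReal.ofReal c * (powWeight (-s') n * tailSup s' B n)) →
      lorentzNorm (1 / s) q A ≤ ENNReal.ofReal K * lorentzNorm (1 / s) q B := by
  by_cases hq_top : q = ⊤
  · subst hq_top
    refine ⟨c, hc, fun A B _ hAB => ?_⟩
    rw [lorentzNorm_top_eq_tailSup, lorentzNorm_top_eq_tailSup]
    refine iSup_le fun n => ?_
    calc powWeight s (0 + n) * A (0 + n)
        ≤ powWeight s n * (ENNReal.ofReal c * (powWeight (-s') n * tailSup s' B n)) := by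
          rw [zero_add]
          gcongr
          exact hAB n
      _ = ENNReal.ofReal c * (powWeight (s - s') n * tailSup s' B n) := by
          rw [sub_eq_add_neg, ← powWeight_mul_powWeight]
          ring
      _ ≤ ENNReal.ofReal c * tailSup s B 0 := by
          gcongr
          simpa using powWeight_mul_tailSup_le (sub_nonneg.mpr hs's.le) s' B n
  · set t := q.toReal
    have ht : 0 < t := ENNReal.toReal_pos hq.ne' hq_top
    set κ := 1 + s' * t * 2 ^ (s' * t) * (1 + 1 / ((s - s') * t))
    have hκ : 0 < κ := by
      have : 0 < (s - s') * t := mul_pos (sub_pos.mpr hs's) ht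
      positivity
    refine ⟨c * κ ^ (1 / t), by positivity, fun A B hB hAB => ?_⟩
    rw [lorentzNorm_eq_tsum hq.ne' hq_top, lorentzNorm_eq_tsum hq.ne' hq_top]
    calc _ ≤ (ENNReal.ofReal c ^ t * ENNReal.ofReal κ *
          ∑' n, powWeight (s * t - 1) n * B n ^ t) ^ (1 / t) := by
          gcongr
          exact tsum_powWeight_mul_rpow_le hs' hs's ht _ hB hAB
      _ = _ := by
          rw [ENNReal.mul_rpow_of_nonneg _ _ (by positivity),
            ENNReal.mul_rpow_of_nonneg _ _ (by positivity), ← ENNReal.rpow_mul,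
            mul_one_div_cancel ht.ne', ENNReal.rpow_one,
            ENNReal.ofReal_rpow_of_nonneg hκ.le (by positivity), ← ENNReal.ofReal_mul hc.le]

/-- Discrete Hardy inequality: if decreasing nonnegative sequences `(a_n), (b_n)` (indexed from 1)
satisfy `a_n ≤ C n^{-r} (Σ_{k=n}^∞ k^{rμ-1} b_k^μ)^{1/μ}`, then for `0 < q ≤ ∞` and `s > r`,
`‖a‖_{ℓ_{1/s,q}} ≤ C' ‖b‖_{ℓ_{1/s,q}}` with `C'` depending only on `μ, s, r, C` (and `q`). -/
theorem discrete_hardy (μ r C : ℝ) (hμ : 0 < μ) (hr : 0 < r) (hC : 0 < C)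
    (s : ℝ) (hs : r < s) (q : ℝ≥0∞) (hq : 0 < q) :
    ∃ C' : ℝ, 0 < C' ∧ ∀ a b : ℕ → ℝ,
      (∀ n, 0 ≤ a n) → (∀ n, 0 ≤ b n) → Antitone a → Antitone b →
      (∀ n : ℕ, ENNReal.ofReal (a n) ≤
        ENNReal.ofReal (C * ((n : ℝ) + 1) ^ (-r)) *
          (∑' k : ℕ, ENNReal.ofReal
            (((n : ℝ) + (k : ℝ) + 1) ^ (r * μ - 1) * b (n + k) ^ μ)) ^ (1 / μ)) →
      lorentzNorm (1 / s) q (fun n => ENNReal.ofReal (a n)) ≤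
        ENNReal.ofReal C' * lorentzNorm (1 / s) q (fun n => ENNReal.ofReal (b n)) := by
  obtain ⟨s', hrs', hs's⟩ := exists_between hs
  have hγ : 0 < (s' - r) * μ := mul_pos (sub_pos.mpr hrs') hμ
  obtain ⟨K, hK, hlorentz⟩ := exists_lorentzNorm_le_of_le_tailSup (hr.trans hrs') hs's
    (by positivity : 0 < C * (1 + 1 / ((s' - r) * μ)) ^ (1 / μ)) hq
  refine ⟨K, hK, fun a b _ hb _ hb_anti hab => hlorentz _ _
    (fun i j hij => ENNReal.ofReal_le_ofReal (hb_anti hij)) fun n => ?_⟩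
  have hterm : ∀ k : ℕ, ENNReal.ofReal (((n : ℝ) + k + 1) ^ (r * μ - 1) * b (n + k) ^ μ) =
      powWeight (r * μ - 1) (n + k) * ENNReal.ofReal (b (n + k)) ^ μ := fun k => by
    rw [ENNReal.ofReal_mul (by positivity), ENNReal.ofReal_rpow_of_nonneg (hb _) hμ.le,
      powWeight, Nat.cast_add]
  refine le_mul_powWeight_mul_tailSup (A := fun n => ENNReal.ofReal (a n)) hμ hrs' C ?_
  have h := hab n
  simp only [ENNReal.ofReal_mul hC.le, hterm] at h
  exact h
end
end

section
/- If (b_n)_{n≥0} is a nonnegative decreasing sequence with (b_n) ∈ ℓ_p for 0 < p < 2, and E_n = (Σ_{k=n+1}^∞ b_k²)^{1/2}, then ‖(E_n/(n+1)^{1/2})_{n≥0}‖_{ℓ_{p,p}} ≤ C_p ‖(b_n)‖_{ℓ_p}; conversely, n^{1/2} b_{2n} ≤ E_{n−1} for all n ≥ 1. -/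
/-!
Cut the tail beyond `n` into the dyadic blocks `[2^j (n+1), 2^(j+1) (n+1))`. Monotonicity gives
`E_n² ≤ Σ_j 2^j (n+1) b²_{2^j (n+1)}`, and since `p/2 ≤ 1` the `p/2`-th power is subadditive, so
`(E_n / (n+1)^{1/2})^p ≤ Σ_j 2^{jp/2} b^p_{2^j (n+1)}`. Summing over `n`, block `j` contributes at most
`2^{j(p/2-1)} ‖b‖_p^p` because `2^j b^p_{2^j (n+1)}` is dominated by the `2^j` terms just before it;
the geometric series converges as `p < 2`. Conversely, `b_{2n}` is dominated by each of the `n`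
terms `b_n, …, b_{2n-1}` of `E_{n-1}²`.
-/

open MeasureTheory ENNReal

noncomputable section

theorem ENNReal.rpow_tsum_le_tsum_rpow {ι : Type*} {q : ℝ} (hq0 : 0 < q) (hq1 : q ≤ 1)
    (f : ι → ℝ≥0∞) : (∑' i, f i) ^ q ≤ ∑' i, f i ^ q := by
  rw [ENNReal.tsum_eq_iSup_sum, ← ENNReal.orderIsoRpow_apply q hq0, OrderIso.map_iSup]
  refine iSup_le fun s => le_trans ?_ (ENNReal.sum_le_tsum s)
  exact Finset.le_sum_of_subadditive _ (by simp [ENNReal.zero_rpow_of_pos hq0])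
    (fun x y => ENNReal.rpow_add_le_add_rpow x y hq0.le hq1) s f

namespace Antitone

variable {f : ℕ → ℝ≥0∞}

theorem tsum_tail_le_tsum_condensed (hf : Antitone f) {m : ℕ} (hm : 0 < m) :
    ∑' k, f (m + k) ≤ ∑' j : ℕ, (2 ^ j * m : ℝ≥0∞) * f (2 ^ j * m) := by
  have hu : Filter.Tendsto (fun j : ℕ => 2 ^ j * m - m) Filter.atTop Filter.atTop := by
    refine Filter.tendsto_atTop_mono (fun j => ?_) Filter.tendsto_id
    rw [← Nat.sub_one_mul]
    exact (Nat.le_sub_one_of_lt j.lt_two_pow_self).trans (Nat.le_mul_of_pos_right _ hm)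
  rw [ENNReal.tsum_eq_iSup_nat' hu]
  refine iSup_le fun j => ?_
  rw [← Finset.sum_Ico_eq_sum_range]
  calc ∑ k ∈ Finset.Ico m (2 ^ j * m), f k
      ≤ ∑ i ∈ Finset.range j, (2 ^ (i + 1) * m - 2 ^ i * m) • f (2 ^ i * m) := by
        simpa using Finset.le_sum_schlomilch' (fun a b _ hab => hf hab)
          (u := fun i => 2 ^ i * m) (fun i => by positivity)
          (fun a b hab => Nat.mul_le_mul_right m (Nat.pow_le_pow_right two_pos hab)) j
    _ = ∑ i ∈ Finset.range j, (2 ^ i * m : ℝ≥0∞) * f (2 ^ i * m) := by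
        refine Finset.sum_congr rfl fun i _ => ?_
        rw [Nat.sub_eq_of_eq_add (by ring : 2 ^ (i + 1) * m = 2 ^ i * m + 2 ^ i * m),
          nsmul_eq_mul]
        norm_cast
    _ ≤ _ := ENNReal.sum_le_tsum _

theorem mul_tsum_mul_succ_le_tsum (hf : Antitone f) (m : ℕ) :
    (m : ℝ≥0∞) * ∑' n, f (m * (n + 1)) ≤ ∑' k, f k := by
  rcases Nat.eq_zero_or_pos m with rfl | hm
  · simp
  have : NeZero m := ⟨hm.ne'⟩
  calc (m : ℝ≥0∞) * ∑' n, f (m * (n + 1))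
      = ∑' n, ∑ _r : Fin m, f (m * (n + 1)) := by
        rw [← ENNReal.tsum_mul_left]; simp
    _ ≤ ∑' n, ∑ r : Fin m, f (n * m + r + 1) := by
        gcongr with n r
        refine hf ?_
        have := r.isLt
        nlinarith
    _ = ∑' k, f (k + 1) := by
        conv_rhs => rw [← (Nat.divModEquiv m).symm.tsum_eq]
        rw [ENNReal.tsum_prod']
        simp [Nat.divModEquiv_symm_apply]
    _ ≤ ∑' k, f k := ENNReal.tsum_comp_le_tsum_of_injective (add_left_injective 1) f

theorem mul_le_tsum_add (hf : Antitone f) (n : ℕ) : (n : ℝ≥0∞) * f (2 * n) ≤ ∑' k, f (n + k) :=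
  calc (n : ℝ≥0∞) * f (2 * n) = ∑ _k ∈ Finset.range n, f (2 * n) := by simp
    _ ≤ ∑ k ∈ Finset.range n, f (n + k) :=
        Finset.sum_le_sum fun k hk => hf (by linarith [Finset.mem_range.mp hk])
    _ ≤ ∑' k, f (n + k) := ENNReal.sum_le_tsum _

theorem rpow_tsum_tail_le (hf : Antitone f) {q : ℝ} (hq0 : 0 < q) (hq1 : q ≤ 1) (n : ℕ) :
    (∑' k, f (n + 1 + k)) ^ q ≤
      ((n : ℝ≥0∞) + 1) ^ q * ∑' j : ℕ, (2 ^ q) ^ j * f (2 ^ j * (n + 1)) ^ q := by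
  have hpow (j : ℕ) : ((2 : ℝ≥0∞) ^ j) ^ q = (2 ^ q) ^ j := by
    rw [← ENNReal.rpow_natCast_mul, mul_comm, ENNReal.rpow_mul_natCast]
  calc (∑' k, f (n + 1 + k)) ^ q
      ≤ (∑' j : ℕ, (2 ^ j * ((n + 1 : ℕ) : ℝ≥0∞)) * f (2 ^ j * (n + 1))) ^ q :=
        ENNReal.rpow_le_rpow (hf.tsum_tail_le_tsum_condensed n.succ_pos) hq0.le
    _ ≤ ∑' j : ℕ, ((2 ^ j * ((n + 1 : ℕ) : ℝ≥0∞)) * f (2 ^ j * (n + 1))) ^ q :=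
        ENNReal.rpow_tsum_le_tsum_rpow hq0 hq1 _
    _ = _ := by
        rw [← ENNReal.tsum_mul_left]
        refine tsum_congr fun j => ?_
        simp only [ENNReal.mul_rpow_of_nonneg _ _ hq0.le, hpow]
        push_cast
        ring

theorem tsum_rpow_tail_div_le (hf : Antitone f) {q : ℝ} (hq0 : 0 < q) (hq1 : q ≤ 1) :
    ∑' n : ℕ, (∑' k, f (n + 1 + k)) ^ q / ((n : ℝ≥0∞) + 1) ^ q ≤
      (1 - 2 ^ (q - 1))⁻¹ * ∑' m, f m ^ q := by
  have hfq : Antitone fun m => f m ^ q := fun a b hab => ENNReal.rpow_le_rpow (hf hab) hq0.le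
  have hblock (j : ℕ) : ∑' n : ℕ, f (2 ^ j * (n + 1)) ^ q ≤ (2 ^ j)⁻¹ * ∑' m, f m ^ q := by
    rw [mul_comm, ← div_eq_mul_inv, ENNReal.le_div_iff_mul_le (by simp) (by simp), mul_comm]
    exact_mod_cast hfq.mul_tsum_mul_succ_le_tsum (2 ^ j)
  have hratio (j : ℕ) : ((2 : ℝ≥0∞) ^ q) ^ j * (2 ^ j)⁻¹ = (2 ^ (q - 1)) ^ j := by
    rw [ENNReal.inv_pow, ← mul_pow, ENNReal.rpow_sub _ _ (by simp) (by simp), ENNReal.rpow_one,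
      div_eq_mul_inv]
  calc ∑' n : ℕ, (∑' k, f (n + 1 + k)) ^ q / ((n : ℝ≥0∞) + 1) ^ q
      ≤ ∑' n : ℕ, ∑' j : ℕ, (2 ^ q) ^ j * f (2 ^ j * (n + 1)) ^ q := by
        refine ENNReal.tsum_le_tsum fun n => ENNReal.div_le_of_le_mul' ?_
        exact hf.rpow_tsum_tail_le hq0 hq1 n
    _ = ∑' j : ℕ, (2 ^ q) ^ j * ∑' n : ℕ, f (2 ^ j * (n + 1)) ^ q := by
        rw [ENNReal.tsum_comm]
        simp only [ENNReal.tsum_mul_left]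
    _ ≤ ∑' j : ℕ, (2 ^ q) ^ j * ((2 ^ j)⁻¹ * ∑' m, f m ^ q) := by
        gcongr with j
        exact hblock j
    _ = (1 - 2 ^ (q - 1))⁻¹ * ∑' m, f m ^ q := by
        simp only [← mul_assoc, ENNReal.tsum_mul_right, hratio, ENNReal.tsum_geometric]

end Antitone

theorem ENNReal.ofReal_sq_rpow_div_two {x r : ℝ} (hx : 0 ≤ x) (hr : 0 ≤ r) :
    ENNReal.ofReal (x ^ 2) ^ (r / 2) = ENNReal.ofReal (x ^ r) := by
  rw [ENNReal.ofReal_rpow_of_nonneg (sq_nonneg x) (by positivity), ← Real.rpow_natCast,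
    ← Real.rpow_mul hx, Nat.cast_ofNat, mul_div_cancel₀ r two_ne_zero]

theorem lorentzNorm_ofReal_self {p : ℝ} (hp : 0 < p) (x : ℕ → ℝ≥0∞) :
    lorentzNorm p (ENNReal.ofReal p) x = (∑' n, x n ^ p) ^ (1 / p) := by
  simp [lorentzNorm, ENNReal.toReal_ofReal hp.le]

theorem Antitone.ofReal_sq {b : ℕ → ℝ} (hb : ∀ n, 0 ≤ b n) (hmono : Antitone b) :
    Antitone fun n => ENNReal.ofReal (b n ^ 2) :=
  fun _ n hmn => ENNReal.ofReal_le_ofReal (pow_le_pow_left₀ (hb n) (hmono hmn) 2)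

theorem lorentzNorm_tail_div_sqrt_le {p : ℝ} (hp0 : 0 < p) (hp2 : p ≤ 2) {b : ℕ → ℝ}
    (hb : ∀ n, 0 ≤ b n) (hmono : Antitone b) :
    lorentzNorm p (ENNReal.ofReal p) (fun n =>
        (∑' k : ℕ, ENNReal.ofReal (b (n + 1 + k) ^ 2)) ^ (1 / 2 : ℝ) /
          ENNReal.ofReal (((n : ℝ) + 1) ^ (1 / 2 : ℝ))) ≤
      (1 - 2 ^ (p / 2 - 1))⁻¹ ^ (1 / p) * lpSeqNorm p b := by
  have hterm (n : ℕ) : ((∑' k, ENNReal.ofReal (b (n + 1 + k) ^ 2)) ^ (1 / 2 : ℝ) /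
        ENNReal.ofReal (((n : ℝ) + 1) ^ (1 / 2 : ℝ))) ^ p =
      (∑' k, ENNReal.ofReal (b (n + 1 + k) ^ 2)) ^ (p / 2) / ((n : ℝ≥0∞) + 1) ^ (p / 2) := by
    have hden : ENNReal.ofReal (((n : ℝ) + 1) ^ (1 / 2 : ℝ)) = ((n : ℝ≥0∞) + 1) ^ (1 / 2 : ℝ) := by
      rw [← ENNReal.ofReal_rpow_of_nonneg (by positivity) (by norm_num)]
      norm_cast
    rw [hden, ENNReal.div_rpow_of_nonneg _ _ hp0.le, ← ENNReal.rpow_mul, ← ENNReal.rpow_mul,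
      one_div_mul_eq_div]
  have hlp : lpSeqNorm p b = (∑' m, ENNReal.ofReal (b m ^ 2) ^ (p / 2)) ^ (1 / p) := by
    simp only [lpSeqNorm, ENNReal.ofReal_sq_rpow_div_two (hb _) hp0.le]
  rw [lorentzNorm_ofReal_self hp0, hlp, ← ENNReal.mul_rpow_of_nonneg _ _ (by positivity)]
  gcongr
  simp only [hterm]
  exact (Antitone.ofReal_sq hb hmono).tsum_rpow_tail_div_le (by positivity) (by linarith)

theorem ofReal_sqrt_mul_le_tail {b : ℕ → ℝ} (hb : ∀ n, 0 ≤ b n) (hmono : Antitone b) (n : ℕ) :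
    ENNReal.ofReal ((n : ℝ) ^ (1 / 2 : ℝ) * b (2 * n)) ≤
      (∑' k : ℕ, ENNReal.ofReal (b (n + k) ^ 2)) ^ (1 / 2 : ℝ) :=
  calc ENNReal.ofReal ((n : ℝ) ^ (1 / 2 : ℝ) * b (2 * n))
      = ((n : ℝ≥0∞) * ENNReal.ofReal (b (2 * n) ^ 2)) ^ (1 / 2 : ℝ) := by
        rw [ENNReal.mul_rpow_of_nonneg _ _ (by norm_num),
          ENNReal.ofReal_sq_rpow_div_two (hb _) zero_le_one, Real.rpow_one,
          ENNReal.ofReal_mul (by positivity), ← ENNReal.ofReal_natCast,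
          ENNReal.ofReal_rpow_of_nonneg (Nat.cast_nonneg n) (by norm_num)]
    _ ≤ (∑' k : ℕ, ENNReal.ofReal (b (n + k) ^ 2)) ^ (1 / 2 : ℝ) :=
        ENNReal.rpow_le_rpow ((Antitone.ofReal_sq hb hmono).mul_le_tsum_add n) (by norm_num)

/-- For nonnegative decreasing `(b_n)_{n≥0} ∈ ℓ_p`, `0 < p < 2`, and
`E_n = (Σ_{k=n+1}^∞ b_k²)^{1/2}`: `‖(E_n/(n+1)^{1/2})_n‖_{ℓ_{p,p}} ≤ C_p ‖b‖_{ℓ_p}`;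
conversely `n^{1/2} b_{2n} ≤ E_{n-1}` for all `n ≥ 1`. -/
theorem tail_lorentz_bound_and_converse (p : ℝ) (hp0 : 0 < p) (hp2 : p < 2) :
    (∃ C : ℝ, 0 < C ∧ ∀ b : ℕ → ℝ, (∀ n, 0 ≤ b n) → Antitone b → lpSeqNorm p b ≠ ∞ →
      lorentzNorm p (ENNReal.ofReal p) (fun n =>
          (∑' k : ℕ, ENNReal.ofReal (b (n + 1 + k) ^ 2)) ^ (1 / 2 : ℝ) /
            ENNReal.ofReal (((n : ℝ) + 1) ^ (1 / 2 : ℝ))) ≤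
        ENNReal.ofReal C * lpSeqNorm p b) ∧
    ∀ b : ℕ → ℝ, (∀ n, 0 ≤ b n) → Antitone b → ∀ n : ℕ, 1 ≤ n →
      ENNReal.ofReal ((n : ℝ) ^ (1 / 2 : ℝ) * b (2 * n)) ≤
        (∑' k : ℕ, ENNReal.ofReal (b (n + k) ^ 2)) ^ (1 / 2 : ℝ) := by
  set K : ℝ≥0∞ := (1 - 2 ^ (p / 2 - 1))⁻¹ ^ (1 / p)
  have hK0 : K ≠ 0 := by simp [K, ENNReal.rpow_eq_zero_iff, hp0.le]
  have hKtop : K ≠ ∞ := by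
    have hr : (2 : ℝ≥0∞) ^ (p / 2 - 1) < 1 :=
      ENNReal.rpow_lt_one_of_one_lt_of_neg one_lt_two (by linarith)
    exact ENNReal.rpow_ne_top_of_nonneg (by positivity)
      (ENNReal.inv_ne_top.mpr (tsub_pos_of_lt hr).ne')
  refine ⟨⟨K.toReal, ENNReal.toReal_pos hK0 hKtop, fun b hb hmono _ => ?_⟩,
    fun b hb hmono n _ => ofReal_sqrt_mul_le_tail hb hmono n⟩
  rw [ENNReal.ofReal_toReal hKtop]
  exact lorentzNorm_tail_div_sqrt_le hp0 hp2.le hb hmono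
end
end
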